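/- Let A ∈ F_2^{(m+1)×(m+1)} be a pseudo-quadratic matrix of rank k over F_2. Then there exist an odd integer k_0 with k_0 < 3k/2 + 1 and vectors v_1,…,v_{k_0} ∈ F_2^{m+1} such that v_{i,1} = 1 for all i ∈ [k_0], A = Σ_{i=1}^{k_0} v_i ⊗ v_i, and D_1(v_i) lies in the column space of D_1(A) for all i ∈ [k_0]. -/
import Mathlib


open scoped BigOperators

/-- Remove the first coordinate of a vector over `F₂`. -/
def D1vec {m : ℕ} (v : Fin (m + 1) → ZMod 2) : Fin m → ZMod 2 := fun i => v i.succ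

/-- Remove the first row and column of a matrix over `F₂`. -/
def D1mat {m : ℕ} (A : Matrix (Fin (m + 1)) (Fin (m + 1)) (ZMod 2)) :
    Matrix (Fin m) (Fin m) (ZMod 2) :=
  A.submatrix Fin.succ Fin.succ

/-- A matrix `A ∈ F₂^{(m+1)×(m+1)}` is pseudo-quadratic if it is symmetric, `A₁,₁ = 1`, and
`A₁,ᵢ = Aᵢ,₁ = Aᵢ,ᵢ` for all `i = 2, …, m+1`. -/
def PseudoQuadratic {m : ℕ} (A : Matrix (Fin (m + 1)) (Fin (m + 1)) (ZMod 2)) : Prop :=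
  A.IsSymm ∧ A 0 0 = 1 ∧ ∀ i : Fin m, A 0 i.succ = A i.succ 0 ∧ A 0 i.succ = A i.succ i.succ


open Matrix Submodule Module

lemma z2_add_self (a : ZMod 2) : a + a = 0 := by revert a; decide

lemma z2_sq (a : ZMod 2) : a * a = a := by revert a; decide

lemma z2_ne_zero {a : ZMod 2} (h : a ≠ 0) : a = 1 := by revert a; decide

lemma mat2_add_self {n m : Type*} (M : Matrix n m (ZMod 2)) : M + M = 0 := by
  ext i j; exact z2_add_self _

lemma vecMulVec_mulVec' {n : ℕ} (a b z : Fin n → ZMod 2) :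
    (Matrix.vecMulVec a b) *ᵥ z = (b ⬝ᵥ z) • a := by
  ext i
  simp only [Matrix.mulVec, dotProduct, Matrix.vecMulVec_apply, Pi.smul_apply,
    smul_eq_mul]
  rw [Finset.sum_mul]
  exact Finset.sum_congr rfl fun t _ => by ring

lemma col_mem_range {n : ℕ} (M : Matrix (Fin n) (Fin n) (ZMod 2)) (i : Fin n) :
    (fun l => M l i) ∈ LinearMap.range M.mulVecLin := by
  refine ⟨Pi.single i 1, ?_⟩
  ext l
  simp [Matrix.mulVecLin_apply]

lemma mulVec_mem_range {n : ℕ} (M : Matrix (Fin n) (Fin n) (ZMod 2)) (z : Fin n → ZMod 2) :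
    M *ᵥ z ∈ LinearMap.range M.mulVecLin := ⟨z, rfl⟩

lemma finrank_add_le_of_disjoint {V : Type*} [AddCommGroup V] [Module (ZMod 2) V]
    [FiniteDimensional (ZMod 2) V]
    (p q r : Submodule (ZMod 2) V) (hp : p ≤ r) (hq : q ≤ r) (hpq : p ⊓ q = ⊥) :
    finrank (ZMod 2) p + finrank (ZMod 2) q ≤ finrank (ZMod 2) r := by
  have h := Submodule.finrank_sup_add_finrank_inf_eq p q
  rw [hpq, finrank_bot, add_zero] at h
  rw [← h]
  exact Submodule.finrank_mono (sup_le hp hq)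

lemma matrix_rank_def {n : ℕ} (M : Matrix (Fin n) (Fin n) (ZMod 2)) :
    M.rank = finrank (ZMod 2) (LinearMap.range M.mulVecLin) := rfl


lemma z2_key (a b c d e f : ZMod 2) :
    (a + c + e) * (b + d + f) + (a + e) * (b + f) + (c + e) * (d + f)
      = a * d + c * b + e * f := by revert a b c d e f; decide

lemma alt_peel {n : ℕ} (C : Matrix (Fin n) (Fin n) (ZMod 2)) (hs : C.IsSymm)
    (hd : ∀ i, C i i = 0) (h0 : C ≠ 0) :
    ∃ (C' : Matrix (Fin n) (Fin n) (ZMod 2)) (a b : Fin n → ZMod 2),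
      C'.IsSymm ∧ (∀ i, C' i i = 0) ∧ C'.rank + 2 ≤ C.rank ∧
      C = C' + (Matrix.vecMulVec a b + Matrix.vecMulVec b a) ∧
      a ∈ LinearMap.range C.mulVecLin ∧ b ∈ LinearMap.range C.mulVecLin ∧
      LinearMap.range C'.mulVecLin ≤ LinearMap.range C.mulVecLin := by
  -- find a nonzero entry
  obtain ⟨i, j, hij⟩ : ∃ i j, C i j ≠ 0 := by
    by_contra h
    push_neg at h
    exact h0 (by ext i j; simp [h])
  have hij1 : C i j = 1 := z2_ne_zero hij
  set a : Fin n → ZMod 2 := fun l => C l i with ha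
  set b : Fin n → ZMod 2 := fun l => C l j with hb
  have hai : a i = 0 := hd i
  have haj : a j = 1 := by show C j i = 1; rw [hs.apply i j]; exact hij1
  have hbi : b i = 1 := hij1
  have hbj : b j = 0 := hd j
  set C' : Matrix (Fin n) (Fin n) (ZMod 2) :=
    C + (Matrix.vecMulVec a b + Matrix.vecMulVec b a) with hC'
  have hC'app : ∀ l t, C' l t = C l t + (a l * b t + b l * a t) := by
    intro l t; simp [hC', Matrix.vecMulVec_apply]
  have hsym' : C'.IsSymm := by
    apply Matrix.IsSymm.ext
    intro l t
    rw [hC'app, hC'app, hs.apply l t]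
    ring
  have hd' : ∀ l, C' l l = 0 := by
    intro l
    rw [hC'app, hd l, mul_comm (b l) (a l), z2_add_self, add_zero]
  have hcoli : ∀ l, C' l i = 0 := by
    intro l
    rw [hC'app, hai, hbi, mul_one, mul_zero, add_zero]
    exact z2_add_self _
  have hcolj : ∀ l, C' l j = 0 := by
    intro l
    rw [hC'app, haj, hbj, mul_one, mul_zero, zero_add]
    exact z2_add_self _
  have hrowi : ∀ t, C' i t = 0 := fun t => (hsym'.apply i t).symm.trans (hcoli t)
  have hrowj : ∀ t, C' j t = 0 := fun t => (hsym'.apply j t).symm.trans (hcolj t)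
  have hvi : ∀ v ∈ LinearMap.range C'.mulVecLin, v i = 0 := by
    rintro v ⟨z, rfl⟩
    simp [Matrix.mulVecLin_apply, Matrix.mulVec, dotProduct, hrowi]
  have hvj : ∀ v ∈ LinearMap.range C'.mulVecLin, v j = 0 := by
    rintro v ⟨z, rfl⟩
    simp [Matrix.mulVecLin_apply, Matrix.mulVec, dotProduct, hrowj]
  have hamem : a ∈ LinearMap.range C.mulVecLin := col_mem_range C i
  have hbmem : b ∈ LinearMap.range C.mulVecLin := col_mem_range C j
  have hC'v : ∀ z, C' *ᵥ z = C *ᵥ z + ((b ⬝ᵥ z) • a + (a ⬝ᵥ z) • b) := by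
    intro z
    rw [hC', Matrix.add_mulVec, Matrix.add_mulVec, vecMulVec_mulVec', vecMulVec_mulVec']
  have hle : LinearMap.range C'.mulVecLin ≤ LinearMap.range C.mulVecLin := by
    rintro v ⟨z, rfl⟩
    rw [Matrix.mulVecLin_apply, hC'v]
    exact add_mem (mulVec_mem_range C z)
      (add_mem (smul_mem _ _ hamem) (smul_mem _ _ hbmem))
  -- linear independence of a, b
  have hli : LinearIndependent (ZMod 2) ![a, b] := by
    rw [linearIndependent_fin2]
    constructor
    · intro h
      have := congrFun h i
      simp [hbi] at this
    · intro s h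
      have := congrFun h j
      simp [hbj, haj] at this
  have hq2 : finrank (ZMod 2) (span (ZMod 2) (Set.range ![a, b])) = 2 := by
    rw [finrank_span_eq_card hli]
    simp
  have hdisj : LinearMap.range C'.mulVecLin ⊓ span (ZMod 2) (Set.range ![a, b]) = ⊥ := by
    rw [eq_bot_iff]
    intro v hv
    rw [Submodule.mem_inf] at hv
    obtain ⟨hv1, hv2⟩ := hv
    rw [mem_span_range_iff_exists_fun] at hv2
    obtain ⟨c, hc⟩ := hv2
    rw [Fin.sum_univ_two] at hc
    simp only [Matrix.cons_val_zero, Matrix.cons_val_one, Matrix.head_cons] at hc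
    have hvi' := hvi v hv1
    have hvj' := hvj v hv1
    have h1 : c 1 = 0 := by
      have := congrFun hc i
      simpa [hai, hbi, hvi'] using this
    have h0' : c 0 = 0 := by
      have := congrFun hc j
      simpa [haj, hbj, hvj'] using this
    have : v = 0 := by rw [← hc, h1, h0']; simp
    simp [this]
  have hqle : span (ZMod 2) (Set.range ![a, b]) ≤ LinearMap.range C.mulVecLin := by
    rw [span_le]
    rintro v ⟨t, rfl⟩
    fin_cases t
    · exact hamem
    · exact hbmem
  have hrank : C'.rank + 2 ≤ C.rank := by
    rw [matrix_rank_def, matrix_rank_def]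
    have := finrank_add_le_of_disjoint (LinearMap.range C'.mulVecLin)
      (span (ZMod 2) (Set.range ![a, b])) (LinearMap.range C.mulVecLin) hle hqle hdisj
    omega
  refine ⟨C', a, b, hsym', hd', hrank, ?_, hamem, hbmem, hle⟩
  rw [hC', add_assoc, mat2_add_self, add_zero]


lemma alt_decomp {n : ℕ} (K : ℕ) :
    ∀ (C : Matrix (Fin n) (Fin n) (ZMod 2)), C.rank ≤ K → C.IsSymm → (∀ i, C i i = 0) →
    ∃ (r : ℕ) (x y : Fin r → (Fin n → ZMod 2)),
      2 * r ≤ C.rank ∧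
      C = ∑ j, (Matrix.vecMulVec (x j) (y j) + Matrix.vecMulVec (y j) (x j)) ∧
      (∀ j, x j ∈ LinearMap.range C.mulVecLin ∧ y j ∈ LinearMap.range C.mulVecLin) := by
  induction K with
  | zero =>
    intro C hK hs hd
    by_cases h0 : C = 0
    · exact ⟨0, Fin.elim0, Fin.elim0, by omega, by simp [h0], fun j => j.elim0⟩
    · obtain ⟨C', a, b, _, _, hrank, _, _, _, _⟩ := alt_peel C hs hd h0
      omega
  | succ K ih =>
    intro C hK hs hd
    by_cases h0 : C = 0
    · exact ⟨0, Fin.elim0, Fin.elim0, by omega, by simp [h0], fun j => j.elim0⟩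
    · obtain ⟨C', a, b, hs', hd', hrank, heq, hamem, hbmem, hle⟩ := alt_peel C hs hd h0
      obtain ⟨r, x, y, h2r, hsum, hmem⟩ := ih C' (by omega) hs' hd'
      refine ⟨r + 1, Fin.cons a x, Fin.cons b y, by omega, ?_, ?_⟩
      · rw [Fin.sum_univ_succ]
        simp only [Fin.cons_zero, Fin.cons_succ]
        rw [← hsum, add_comm]
        exact heq
      · intro j
        refine Fin.cases ?_ ?_ j
        · simp only [Fin.cons_zero]
          exact ⟨hamem, hbmem⟩
        · intro j'
          simp only [Fin.cons_succ]
          exact ⟨hle (hmem j').1, hle (hmem j').2⟩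

lemma diag_peel {n : ℕ} (B : Matrix (Fin n) (Fin n) (ZMod 2)) (hs : B.IsSymm)
    (i : Fin n) (hi : B i i = 1) :
    ∃ (B' : Matrix (Fin n) (Fin n) (ZMod 2)) (a : Fin n → ZMod 2),
      B'.IsSymm ∧ B'.rank < B.rank ∧
      LinearMap.range B'.mulVecLin ≤ LinearMap.range B.mulVecLin ∧
      a ∈ LinearMap.range B.mulVecLin ∧
      (fun l => B l l) = (fun l => B' l l) + a := by
  set a : Fin n → ZMod 2 := fun l => B l i with ha
  have hai : a i = 1 := hi
  set B' : Matrix (Fin n) (Fin n) (ZMod 2) := B + Matrix.vecMulVec a a with hB'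
  have hB'app : ∀ l t, B' l t = B l t + a l * a t := by
    intro l t; simp [hB', Matrix.vecMulVec_apply]
  have hsym' : B'.IsSymm := by
    apply Matrix.IsSymm.ext
    intro l t
    rw [hB'app, hB'app, hs.apply l t]
    ring
  have hcoli : ∀ l, B' l i = 0 := by
    intro l
    rw [hB'app, hai, mul_one]
    exact z2_add_self _
  have hrowi : ∀ t, B' i t = 0 := fun t => (hsym'.apply i t).symm.trans (hcoli t)
  have hvi : ∀ v ∈ LinearMap.range B'.mulVecLin, v i = 0 := by
    rintro v ⟨z, rfl⟩
    simp [Matrix.mulVecLin_apply, Matrix.mulVec, dotProduct, hrowi]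
  have hamem : a ∈ LinearMap.range B.mulVecLin := col_mem_range B i
  have hle : LinearMap.range B'.mulVecLin ≤ LinearMap.range B.mulVecLin := by
    rintro v ⟨z, rfl⟩
    rw [Matrix.mulVecLin_apply, hB', Matrix.add_mulVec, vecMulVec_mulVec']
    exact add_mem (mulVec_mem_range B z) (smul_mem _ _ hamem)
  have hanot : a ∉ LinearMap.range B'.mulVecLin := by
    intro h
    have := hvi a h
    rw [hai] at this
    exact one_ne_zero this
  have hlt : B'.rank < B.rank := by
    rw [matrix_rank_def, matrix_rank_def]
    exact Submodule.finrank_lt_finrank_of_lt (lt_of_le_of_ne hle (fun h => hanot (h ▸ hamem)))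
  refine ⟨B', a, hsym', hlt, hle, hamem, ?_⟩
  ext l
  rw [Pi.add_apply, hB'app, z2_sq, add_assoc, z2_add_self, add_zero]

lemma diag_mem_range_aux {n : ℕ} (K : ℕ) :
    ∀ (B : Matrix (Fin n) (Fin n) (ZMod 2)), B.rank ≤ K → B.IsSymm →
      (fun l => B l l) ∈ LinearMap.range B.mulVecLin := by
  induction K with
  | zero =>
    intro B hK hs
    by_cases hd : ∀ l, B l l = 0
    · exact ⟨0, by ext l; simp [hd l]⟩
    · push_neg at hd
      obtain ⟨i, hi⟩ := hd
      obtain ⟨B', a, _, hlt, _, _, _⟩ := diag_peel B hs i (z2_ne_zero hi)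
      omega
  | succ K ih =>
    intro B hK hs
    by_cases hd : ∀ l, B l l = 0
    · exact ⟨0, by ext l; simp [hd l]⟩
    · push_neg at hd
      obtain ⟨i, hi⟩ := hd
      obtain ⟨B', a, hs', hlt, hle, hamem, hdiag⟩ := diag_peel B hs i (z2_ne_zero hi)
      have hmem' := ih B' (by omega) hs'
      rw [hdiag]
      exact add_mem (hle hmem') hamem

lemma diag_mem_range {n : ℕ} (B : Matrix (Fin n) (Fin n) (ZMod 2)) (hs : B.IsSymm) :
    (fun l => B l l) ∈ LinearMap.range B.mulVecLin :=
  diag_mem_range_aux B.rank B le_rfl hs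


lemma transfer {m k0 : ℕ} {ι : Type} [Fintype ι] (hcard : Fintype.card ι = k0)
    (A : Matrix (Fin (m + 1)) (Fin (m + 1)) (ZMod 2))
    (W : Submodule (ZMod 2) (Fin m → ZMod 2))
    (V : ι → (Fin (m + 1) → ZMod 2)) (h1 : ∀ o, V o 0 = 1)
    (h2 : A = ∑ o, Matrix.vecMulVec (V o) (V o)) (h3 : ∀ o, D1vec (V o) ∈ W) :
    ∃ v : Fin k0 → (Fin (m + 1) → ZMod 2),
      (∀ i, v i 0 = 1) ∧ A = ∑ i, Matrix.vecMulVec (v i) (v i) ∧ (∀ i, D1vec (v i) ∈ W) := by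
  obtain e := Fintype.equivFinOfCardEq hcard
  refine ⟨V ∘ e.symm, fun i => h1 _, ?_, fun i => h3 _⟩
  rw [h2]
  exact (Equiv.sum_comp e.symm fun o => Matrix.vecMulVec (V o) (V o)).symm


/-- a pseudo-quadratic matrix of rank `k` decomposes as a sum of `k₀ < 3k/2 + 1`
outer squares `vᵢ ⊗ vᵢ` with `k₀` odd, each `vᵢ` having first coordinate `1` and `D₁(vᵢ)`
in the column space of `D₁(A)`. -/
theorem pseudoQuadratic_odd_decomposition (m k : ℕ)
    (A : Matrix (Fin (m + 1)) (Fin (m + 1)) (ZMod 2))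
    (hpq : PseudoQuadratic A) (hrank : A.rank = k) :
    ∃ k0 : ℕ, Odd k0 ∧ 2 * k0 < 3 * k + 2 ∧
      ∃ v : Fin k0 → (Fin (m + 1) → ZMod 2),
        (∀ i, v i 0 = 1) ∧
        A = ∑ i, Matrix.vecMulVec (v i) (v i) ∧
        (∀ i, D1vec (v i) ∈ LinearMap.range (D1mat A).mulVecLin) := by
  obtain ⟨hsA, hA00, hApq⟩ := hpq
  set w : Fin (m + 1) → ZMod 2 := fun i => A i 0 with hwdef
  have hw0 : w 0 = 1 := hA00
  set Chat : Matrix (Fin (m + 1)) (Fin (m + 1)) (ZMod 2) :=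
    A + Matrix.vecMulVec w w with hChat
  have hChatapp : ∀ l t, Chat l t = A l t + w l * w t := by
    intro l t; simp [hChat, Matrix.vecMulVec_apply]
  have hChatsymm : Chat.IsSymm := by
    apply Matrix.IsSymm.ext
    intro l t
    rw [hChatapp, hChatapp, hsA.apply l t]
    ring
  have hChatdiag : ∀ i, Chat i i = 0 := by
    intro i
    refine Fin.cases ?_ ?_ i
    · rw [hChatapp]
      show A 0 0 + A 0 0 * A 0 0 = 0
      rw [hA00]; decide
    · intro i'
      rw [hChatapp, z2_sq]
      show A i'.succ i'.succ + A i'.succ 0 = 0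
      rw [← (hApq i').1, (hApq i').2]
      exact z2_add_self _
  have hcol0 : ∀ l, Chat l 0 = 0 := by
    intro l
    rw [hChatapp, hw0, mul_one]
    exact z2_add_self _
  have hrow0 : ∀ t, Chat 0 t = 0 := fun t => (hChatsymm.apply 0 t).symm.trans (hcol0 t)
  have hv0 : ∀ v ∈ LinearMap.range Chat.mulVecLin, v 0 = 0 := by
    rintro v ⟨z, rfl⟩
    simp [Matrix.mulVecLin_apply, Matrix.mulVec, dotProduct, hrow0]
  have hwmem : w ∈ LinearMap.range A.mulVecLin := col_mem_range A 0
  have hChatle : LinearMap.range Chat.mulVecLin ≤ LinearMap.range A.mulVecLin := by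
    rintro v ⟨z, rfl⟩
    rw [Matrix.mulVecLin_apply, hChat, Matrix.add_mulVec, vecMulVec_mulVec']
    exact add_mem (mulVec_mem_range A z) (smul_mem _ _ hwmem)
  have hwne : w ≠ 0 := by
    intro h
    have := congrFun h 0
    rw [hw0] at this
    exact one_ne_zero this
  have hwspan : (span (ZMod 2) {w} : Submodule (ZMod 2) (Fin (m + 1) → ZMod 2))
      ≤ LinearMap.range A.mulVecLin := by
    rw [span_singleton_le_iff_mem]; exact hwmem
  have hdisj : LinearMap.range Chat.mulVecLin ⊓ span (ZMod 2) {w} = ⊥ := by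
    rw [eq_bot_iff]
    intro v hv
    rw [Submodule.mem_inf] at hv
    obtain ⟨hv1, hv2⟩ := hv
    rw [mem_span_singleton] at hv2
    obtain ⟨c, hc⟩ := hv2
    have h0 : v 0 = c := by rw [← hc, Pi.smul_apply, hw0, smul_eq_mul, mul_one]
    have hc0 : c = 0 := by rw [← h0]; exact hv0 v hv1
    have : v = 0 := by rw [← hc, hc0, zero_smul]
    simp [this]
  have hChatrank : Chat.rank + 1 ≤ k := by
    have h := finrank_add_le_of_disjoint (LinearMap.range Chat.mulVecLin)
      (span (ZMod 2) {w}) (LinearMap.range A.mulVecLin) hChatle hwspan hdisj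
    rw [finrank_span_singleton hwne] at h
    rw [matrix_rank_def]
    rw [matrix_rank_def] at hrank
    omega
  set B : Matrix (Fin m) (Fin m) (ZMod 2) := D1mat A with hB
  have hsB : B.IsSymm := by
    apply Matrix.IsSymm.ext
    intro l t
    exact hsA.apply l.succ t.succ
  set u : Fin m → ZMod 2 := D1vec w with hu'
  have hudiag : (fun l => B l l) = u := by
    funext l
    show A l.succ l.succ = A l.succ 0
    rw [← (hApq l).2, (hApq l).1]
  have hu : u ∈ LinearMap.range B.mulVecLin := hudiag ▸ diag_mem_range B hsB
  have hD1eq : ∀ z : Fin (m + 1) → ZMod 2,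
      D1vec (Chat *ᵥ z) = B *ᵥ (D1vec z) + (u ⬝ᵥ (D1vec z)) • u := by
    intro z
    funext i
    show (Chat *ᵥ z) i.succ = (B *ᵥ D1vec z) i + (u ⬝ᵥ D1vec z) * u i
    rw [show (Chat *ᵥ z) i.succ = ∑ s : Fin (m + 1), Chat i.succ s * z s from rfl]
    rw [Fin.sum_univ_succ, hcol0 i.succ, zero_mul, zero_add]
    have hterm : ∀ s' : Fin m, Chat i.succ s'.succ * z s'.succ
        = B i s' * D1vec z s' + u i * (u s' * D1vec z s') := by
      intro s'
      rw [hChatapp]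
      show (A i.succ s'.succ + w i.succ * w s'.succ) * z s'.succ
        = A i.succ s'.succ * z s'.succ + w i.succ * (w s'.succ * z s'.succ)
      ring
    rw [Finset.sum_congr rfl fun s' _ => hterm s', Finset.sum_add_distrib]
    congr 1
    rw [← Finset.mul_sum]
    show u i * (u ⬝ᵥ D1vec z) = (u ⬝ᵥ D1vec z) * u i
    ring
  have hD1mem : ∀ v ∈ LinearMap.range Chat.mulVecLin,
      D1vec v ∈ LinearMap.range B.mulVecLin := by
    rintro v ⟨z, rfl⟩
    rw [Matrix.mulVecLin_apply, hD1eq]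
    exact add_mem (mulVec_mem_range B (D1vec z)) (smul_mem _ _ hu)
  have hA : A = Chat + Matrix.vecMulVec w w := by
    rw [hChat, add_assoc, mat2_add_self, add_zero]
  -- decompose Chat
  obtain ⟨r, x, y, h2r, hsum, hmem⟩ := alt_decomp Chat.rank Chat le_rfl hChatsymm hChatdiag
  have hx0 : ∀ j, x j 0 = 0 := fun j => hv0 _ (hmem j).1
  have hy0 : ∀ j, y j 0 = 0 := fun j => hv0 _ (hmem j).2
  have hxD1 : ∀ j, D1vec (x j) ∈ LinearMap.range B.mulVecLin := fun j => hD1mem _ (hmem j).1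
  have hyD1 : ∀ j, D1vec (y j) ∈ LinearMap.range B.mulVecLin := fun j => hD1mem _ (hmem j).2
  set P : Fin r → (Fin (m + 1) → ZMod 2) := fun j => x j + y j + w with hP
  set Q : Fin r → (Fin (m + 1) → ZMod 2) := fun j => x j + w with hQ
  set S : Fin r → (Fin (m + 1) → ZMod 2) := fun j => y j + w with hS
  have htriple : ∀ j, Matrix.vecMulVec (P j) (P j) + Matrix.vecMulVec (Q j) (Q j)
      + Matrix.vecMulVec (S j) (S j)
      = Matrix.vecMulVec (x j) (y j) + Matrix.vecMulVec (y j) (x j)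
        + Matrix.vecMulVec w w := by
    intro j
    ext i l
    simp only [Matrix.add_apply, Matrix.vecMulVec_apply, hP, hQ, hS, Pi.add_apply]
    exact z2_key (x j i) (x j l) (y j i) (y j l) (w i) (w l)
  have hP0 : ∀ j, P j 0 = 1 := by
    intro j
    simp only [hP, Pi.add_apply, hx0, hy0, hw0, add_zero, zero_add]
  have hQ0 : ∀ j, Q j 0 = 1 := by
    intro j
    simp only [hQ, Pi.add_apply, hx0, hw0, zero_add]
  have hS0 : ∀ j, S j 0 = 1 := by
    intro j
    simp only [hS, Pi.add_apply, hy0, hw0, zero_add]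
  have hPD1 : ∀ j, D1vec (P j) ∈ LinearMap.range B.mulVecLin := by
    intro j
    show D1vec (x j) + D1vec (y j) + u ∈ _
    exact add_mem (add_mem (hxD1 j) (hyD1 j)) hu
  have hQD1 : ∀ j, D1vec (Q j) ∈ LinearMap.range B.mulVecLin := by
    intro j
    show D1vec (x j) + u ∈ _
    exact add_mem (hxD1 j) hu
  have hSD1 : ∀ j, D1vec (S j) ∈ LinearMap.range B.mulVecLin := by
    intro j
    show D1vec (y j) + u ∈ _
    exact add_mem (hyD1 j) hu
  have heven_smul : ∀ s : ℕ, (s + s) • Matrix.vecMulVec w w = 0 := by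
    intro s
    rw [add_smul]
    exact mat2_add_self _
  rcases Nat.even_or_odd r with hre | hro
  · -- r even: k0 = 3r + 1
    obtain ⟨s, hs2⟩ := hre
    refine ⟨3 * r + 1, ⟨3 * s, by omega⟩, by omega, ?_⟩
    have hcard : Fintype.card (Option (Fin r × Fin 3)) = 3 * r + 1 := by
      simp [Fintype.card_option, Fintype.card_prod]
      ring
    set V : Option (Fin r × Fin 3) → (Fin (m + 1) → ZMod 2) := fun o =>
      Option.casesOn o w (fun p => ![P p.1, Q p.1, S p.1] p.2) with hV
    refine transfer hcard A _ V ?_ ?_ ?_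
    · rintro (_ | ⟨j, t⟩)
      · exact hw0
      · fin_cases t
        · exact hP0 j
        · exact hQ0 j
        · exact hS0 j
    · rw [Fintype.sum_option]
      rw [Fintype.sum_prod_type]
      have hinner : ∀ j : Fin r,
          (∑ t : Fin 3, Matrix.vecMulVec (V (some (j, t))) (V (some (j, t))))
          = Matrix.vecMulVec (x j) (y j) + Matrix.vecMulVec (y j) (x j)
            + Matrix.vecMulVec w w := by
        intro j
        rw [Fin.sum_univ_three]
        exact htriple j
      rw [Finset.sum_congr rfl fun j _ => hinner j]
      rw [Finset.sum_add_distrib, ← hsum, Finset.sum_const, Finset.card_univ, Fintype.card_fin]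
      have hr0 : r • Matrix.vecMulVec w w = 0 := by rw [hs2]; exact heven_smul s
      rw [hr0, add_zero]
      exact hA.trans (add_comm _ _)
    · rintro (_ | ⟨j, t⟩)
      · exact hu
      · fin_cases t
        · exact hPD1 j
        · exact hQD1 j
        · exact hSD1 j
  · -- r odd: k0 = 3r
    obtain ⟨s, hs2⟩ := hro
    refine ⟨3 * r, ⟨3 * s + 1, by omega⟩, by omega, ?_⟩
    have hcard : Fintype.card (Fin r × Fin 3) = 3 * r := by
      simp [Fintype.card_prod]
      ring
    set V : Fin r × Fin 3 → (Fin (m + 1) → ZMod 2) :=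
      fun p => ![P p.1, Q p.1, S p.1] p.2 with hV
    refine transfer hcard A _ V ?_ ?_ ?_
    · rintro ⟨j, t⟩
      fin_cases t
      · exact hP0 j
      · exact hQ0 j
      · exact hS0 j
    · rw [Fintype.sum_prod_type]
      have hinner : ∀ j : Fin r,
          (∑ t : Fin 3, Matrix.vecMulVec (V (j, t)) (V (j, t)))
          = Matrix.vecMulVec (x j) (y j) + Matrix.vecMulVec (y j) (x j)
            + Matrix.vecMulVec w w := by
        intro j
        rw [Fin.sum_univ_three]
        exact htriple j
      rw [Finset.sum_congr rfl fun j _ => hinner j]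
      rw [Finset.sum_add_distrib, ← hsum, Finset.sum_const, Finset.card_univ, Fintype.card_fin]
      have hr1 : r • Matrix.vecMulVec w w = Matrix.vecMulVec w w := by
        rw [hs2, add_smul, one_smul, two_mul, heven_smul, zero_add]
      rw [hr1]
      exact hA
    · rintro ⟨j, t⟩
      fin_cases t
      · exact hPD1 j
      · exact hQD1 j
      · exact hSD1 j
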